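/- For n ≥ 1, the folded hypercube FQ_n is a bipartite graph if and only if n is odd. -/

import Mathlib

/-- Number of coordinates in which two vertices of the cube differ (Hamming distance). -/
def diffCount {n : ℕ} (x y : Fin n → Bool) : ℕ :=
  (Finset.univ.filter fun i => x i ≠ y i).card

lemma diffCount_comm {n : ℕ} (x y : Fin n → Bool) : diffCount x y = diffCount y x := by
  unfold diffCount
  congr 1
  apply Finset.filter_congr
  intro i _
  exact ne_comm

/-- The `n`-dimensional hypercube. -/
def Qn (n : ℕ) : SimpleGraph (Fin n → Bool) where
  Adj x y := diffCount x y = 1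
  symm := ⟨by intro x y h; show diffCount y x = 1; rw [diffCount_comm]; exact h⟩
  loopless := ⟨by intro x h; simp [diffCount] at h⟩

/-- The `n`-dimensional folded hypercube. -/
def FQn (n : ℕ) : SimpleGraph (Fin n → Bool) where
  Adj x y := x ≠ y ∧ (diffCount x y = 1 ∨ diffCount x y = n)
  symm := ⟨by
    rintro x y ⟨h1, h2⟩
    exact ⟨h1.symm, by rw [diffCount_comm]; exact h2⟩⟩
  loopless := ⟨fun x h => h.1 rfl⟩

/-- Flip bit `i` (hypercube neighbour `u^{i+1}` in 1-based notation). -/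
def hFlip {n : ℕ} (u : Fin n → Bool) (i : Fin n) : Fin n → Bool :=
  fun j => if j = i then !(u j) else u j

/-- Flip bits `0,…,i` (complement neighbour `ū^{i+1}` in 1-based notation). -/
def cFlip {n : ℕ} (u : Fin n → Bool) (i : Fin n) : Fin n → Bool :=
  fun j => if j ≤ i then !(u j) else u j

lemma hFlip_hFlip {n : ℕ} (u : Fin n → Bool) (i : Fin n) : hFlip (hFlip u i) i = u := by
  funext j; simp only [hFlip]; split <;> simp

lemma cFlip_cFlip {n : ℕ} (u : Fin n → Bool) (i : Fin n) : cFlip (cFlip u i) i = u := by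
  funext j; simp only [cFlip]; split <;> simp

/-- The `n`-dimensional augmented cube. -/
def AQn (n : ℕ) : SimpleGraph (Fin n → Bool) where
  Adj x y := x ≠ y ∧ ((∃ i, y = hFlip x i) ∨ (∃ i : Fin n, 1 ≤ i.val ∧ y = cFlip x i))
  symm := ⟨by
    rintro x y ⟨h1, h2⟩
    refine ⟨h1.symm, ?_⟩
    rcases h2 with ⟨i, rfl⟩ | ⟨i, hi, rfl⟩
    · exact Or.inl ⟨i, (hFlip_hFlip x i).symm⟩
    · exact Or.inr ⟨i, hi, (cFlip_cFlip x i).symm⟩⟩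
  loopless := ⟨fun x h => h.1 rfl⟩
/-!
If `n` is odd, both kinds of edges of `FQ_n` join vertices at odd Hamming distance, so the parity
of the number of `true` coordinates is a proper 2-colouring. If `n` is even, the staircase vertices
`0…0, 10…0, 110…0, …, 1…1` form a closed walk of `n` cube edges and one complement edge, i.e. an
odd cycle of length `n + 1`.
-/

open SimpleGraph

section HammingParity

variable {ι : Type*} [Fintype ι]

def weightParity (x : ι → Bool) : ZMod 2 :=
  ∑ i, ((x i).toNat : ZMod 2)

theorem natCast_hammingDist_eq_weightParity_add (x y : ι → Bool) :
    (hammingDist x y : ZMod 2) = weightParity x + weightParity y := by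
  rw [hammingDist, Finset.natCast_card_filter, weightParity, weightParity,
    ← Finset.sum_add_distrib]
  refine Finset.sum_congr rfl fun i _ => ?_
  cases x i <;> cases y i <;> decide

theorem colorable_two_of_odd_hammingDist {G : SimpleGraph (ι → Bool)}
    (h : ∀ x y, G.Adj x y → Odd (hammingDist x y)) : G.Colorable 2 := by
  refine (Coloring.mk weightParity fun {x y} hxy hcol => ?_).colorable
  have hone := (h x y hxy).natCast_zmod_two
  rw [natCast_hammingDist_eq_weightParity_add, hcol, CharTwo.add_self_eq_zero] at hone
  exact zero_ne_one hone

end HammingParity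

theorem diffCount_eq_hammingDist {n : ℕ} (x y : Fin n → Bool) :
    diffCount x y = hammingDist x y :=
  rfl

theorem FQn.odd_hammingDist_of_adj {n : ℕ} (hn : Odd n) {x y : Fin n → Bool}
    (h : (FQn n).Adj x y) : Odd (hammingDist x y) := by
  rw [← diffCount_eq_hammingDist]
  rcases h.2 with h | h <;> rw [h]
  exacts [odd_one, hn]

def staircase (n k : ℕ) : Fin n → Bool :=
  fun j => decide (j.val < k)

theorem diffCount_staircase_succ {n k : ℕ} (hk : k < n) :
    diffCount (staircase n k) (staircase n (k + 1)) = 1 := by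
  rw [diffCount, Finset.card_eq_one]
  refine ⟨⟨k, hk⟩, Finset.ext fun j => ?_⟩
  simp only [staircase, Finset.mem_filter, Finset.mem_univ, true_and, Finset.mem_singleton,
    ne_eq, decide_eq_decide, Fin.ext_iff]
  omega

theorem diffCount_staircase_zero_last (n : ℕ) :
    diffCount (staircase n 0) (staircase n n) = n := by
  simp [diffCount, staircase]

theorem FQn.adj_iff_diffCount {n : ℕ} {x y : Fin n → Bool} :
    (FQn n).Adj x y ↔ diffCount x y = 1 ∨ (0 < n ∧ diffCount x y = n) := by
  change x ≠ y ∧ _ ↔ _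
  rw [← hammingDist_ne_zero, diffCount_eq_hammingDist]
  omega

theorem Fin.val_sub_eq_one_iff {n : ℕ} {u v : Fin (n + 1)} :
    (u - v).val = 1 ↔ u.val = v.val + 1 ∨ (u.val = 0 ∧ v.val = n ∧ 0 < n) := by
  have := u.isLt
  have := v.isLt
  rcases le_or_gt v u with h | h
  · rw [Fin.sub_val_of_le h]; rw [Fin.le_def] at h; omega
  · rw [Fin.coe_sub_iff_lt.mpr h]; rw [Fin.lt_def] at h; omega

theorem FQn.adj_staircase_of_val_sub_eq_one {n : ℕ} {u v : Fin (n + 1)} (h : (u - v).val = 1) :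
    (FQn n).Adj (staircase n v) (staircase n u) := by
  rcases Fin.val_sub_eq_one_iff.mp h with hsucc | ⟨hu, hv, hn⟩
  · rw [hsucc, FQn.adj_iff_diffCount, diffCount_staircase_succ (by omega)]
    exact Or.inl rfl
  · rw [hu, hv]
    exact (FQn.adj_iff_diffCount.mpr (Or.inr ⟨hn, diffCount_staircase_zero_last n⟩)).symm

def staircaseHom (n : ℕ) : cycleGraph (n + 1) →g FQn n where
  toFun k := staircase n k
  map_rel' h := (cycleGraph_adj'.mp h).elim
    (fun h => (FQn.adj_staircase_of_val_sub_eq_one h).symm) FQn.adj_staircase_of_val_sub_eq_one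

/-- for `n ≥ 1`, `FQ_n` is bipartite (2-colorable) iff `n` is odd. -/
theorem stmt3 (n : ℕ) (hn : 1 ≤ n) :
    (FQn n).Colorable 2 ↔ Odd n := by
  refine ⟨fun hcol => ?_, fun hodd => colorable_two_of_odd_hammingDist fun _ _ =>
    FQn.odd_hammingDist_of_adj hodd⟩
  by_contra heven
  have hcycle : Odd (n + 1) := (Nat.not_odd_iff_even.mp heven).add_one
  have hchrom := chromaticNumber_cycleGraph_of_odd (n + 1) (by omega) hcycle
  have hle := (hcol.of_hom (staircaseHom n)).chromaticNumber_le
  rw [hchrom] at hle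
  norm_num at hle
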